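/- Define η₁(k) = −1/24 + ((1 + k²)E(k) − (1 − k²)K(k)) / (6·(2E(k) − (1 − k²)K(k))³) for k ∈ (0,1). Then η₁ is strictly increasing on (0,1), η₁(k) → −1/24 as k → 0⁺, η₁(k) → 0 as k → 1⁻, and consequently η₁ is a bijection from (0,1) onto the interval (−1/24, 0). -/

import Mathlib

noncomputable section

/-- The complete elliptic integral of the first kind with modulus `k`. -/
def ellipticK (k : ℝ) : ℝ :=
  ∫ θ in (0:ℝ)..(Real.pi / 2), 1 / Real.sqrt (1 - k ^ 2 * Real.sin θ ^ 2)

/-- The complete elliptic integral of the second kind with modulus `k`. -/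
def ellipticE (k : ℝ) : ℝ :=
  ∫ θ in (0:ℝ)..(Real.pi / 2), Real.sqrt (1 - k ^ 2 * Real.sin θ ^ 2)

/-- The function `η₁` parametrizing points of the Martinet plane reached by normal
extremals at `τ = 2K`. -/
def eta1 (k : ℝ) : ℝ :=
  -1 / 24 + ((1 + k ^ 2) * ellipticE k - (1 - k ^ 2) * ellipticK k) /
    (6 * (2 * ellipticE k - (1 - k ^ 2) * ellipticK k) ^ 3)

/-!
Write `I_p(k) = ∫₀^{π/2} (1 - k² sin² θ)^p dθ` (`ellipticPowIntegral p k`), so that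
`E = I_{1/2}` and `K = I_{-1/2}`. Differentiating under the integral sign gives
`k I_p' = 2p (I_p - I_{p-1})`, and integrating
`d/dθ (sin θ cos θ (1 - k² sin² θ)^p)` over `[0, π/2]` gives a three-term recurrence which, at
`p = -1/2`, reads `(1 - k²) I_{-3/2} = E`. Together these are Legendre's formulas
`E' = (E - K)/k` and `K' = (E - (1 - k²) K)/(k (1 - k²))`, from which
`η₁' = (1 - k²)(E - (1 - k)K)((1 + k)K - E) / (2k (2E - (1 - k²)K)⁴)`.
Comparing integrands, `(1 - k) K < E ≤ K` because `1 - k² sin² θ ≥ 1 - k² > 1 - k`, so `η₁' > 0`.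
The limits come from `E(0) = K(0) = π/2`, `E(1) = 1` and `0 ≤ (1 - k²) K ≤ (π/2) √(1 - k²)`,
and a continuous strictly increasing function on `(0, 1)` with one-sided limits `-1/24` and `0`
is a bijection onto `(-1/24, 0)`.
-/

open Real Set Filter Topology intervalIntegral
open MeasureTheory (volume ae_of_all)

theorem intervalIntegral.hasDerivAt_integral_of_continuousOn {E : Type*} [NormedAddCommGroup E]
    [NormedSpace ℝ E] {F F' : ℝ → ℝ → E} {U : Set ℝ} {x₀ a b : ℝ} (hU : IsOpen U) (hx₀ : x₀ ∈ U)
    (hF : ContinuousOn F.uncurry (U ×ˢ univ)) (hF' : ContinuousOn F'.uncurry (U ×ˢ univ))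
    (hdiff : ∀ x ∈ U, ∀ t, HasDerivAt (F · t) (F' x t) x) :
    HasDerivAt (fun x => ∫ t in a..b, F x t) (∫ t in a..b, F' x₀ t) x₀ := by
  have slice : ∀ G : ℝ → ℝ → E, ContinuousOn G.uncurry (U ×ˢ univ) → ∀ x ∈ U,
      Continuous (G x) := fun G hG x hx =>
    continuousOn_univ.1 <| hG.comp (f := fun t => (x, t)) (by fun_prop) fun t _ => ⟨hx, mem_univ t⟩
  obtain ⟨ε, hε, hball⟩ := Metric.nhds_basis_closedBall.mem_iff.1 (hU.mem_nhds hx₀)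
  obtain ⟨C, hC⟩ := ((isCompact_closedBall x₀ ε).prod isCompact_uIcc).exists_bound_of_continuousOn
    (hF'.mono (prod_mono hball (subset_univ (uIcc a b))))
  exact (hasDerivAt_integral_of_dominated_loc_of_deriv_le (bound := fun _ => C)
    (Metric.ball_mem_nhds x₀ hε)
    (eventually_of_mem (hU.mem_nhds hx₀) fun x hx => (slice F hF x hx).aestronglyMeasurable)
    ((slice F hF x₀ hx₀).intervalIntegrable _ _) (slice F' hF' x₀ hx₀).aestronglyMeasurable
    (ae_of_all _ fun t ht x hx => hC (x, t) ⟨Metric.ball_subset_closedBall hx, uIoc_subset_uIcc ht⟩)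
    intervalIntegrable_const
    (ae_of_all _ fun t _ x hx => hdiff x (hball (Metric.ball_subset_closedBall hx)) t)).2

def ellipticPowIntegral (p k : ℝ) : ℝ :=
  ∫ θ in (0:ℝ)..π / 2, (1 - k ^ 2 * sin θ ^ 2) ^ p

section EllipticPowIntegral

variable {k : ℝ}

lemma one_sub_sq_le_one_sub_sq_mul_sin_sq (k θ : ℝ) : 1 - k ^ 2 ≤ 1 - k ^ 2 * sin θ ^ 2 := by
  nlinarith [sin_sq_le_one θ, sq_nonneg k]

lemma one_sub_sq_mul_sin_sq_le_one (k θ : ℝ) : 1 - k ^ 2 * sin θ ^ 2 ≤ 1 := by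
  nlinarith [sq_nonneg k, sq_nonneg (sin θ)]

lemma one_sub_sq_mul_sin_sq_pos (hk : k ^ 2 < 1) (θ : ℝ) : 0 < 1 - k ^ 2 * sin θ ^ 2 :=
  (sub_pos.2 hk).trans_le (one_sub_sq_le_one_sub_sq_mul_sin_sq k θ)

lemma intervalIntegrable_one_sub_sq_mul_sin_sq_rpow (p : ℝ) (hk : k ^ 2 < 1) (a b : ℝ) :
    IntervalIntegrable (fun θ => (1 - k ^ 2 * sin θ ^ 2) ^ p) volume a b :=
  ((continuous_const.sub (continuous_const.mul (continuous_sin.pow 2))).rpow_const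
    fun θ => Or.inl (one_sub_sq_mul_sin_sq_pos hk θ).ne').intervalIntegrable a b

lemma ellipticPowIntegral_zero (p : ℝ) : ellipticPowIntegral p 0 = π / 2 := by
  simp [ellipticPowIntegral]

lemma hasDerivAt_ellipticPowIntegral (p : ℝ) (hk : k ^ 2 < 1) :
    HasDerivAt (ellipticPowIntegral p)
      (∫ θ in (0:ℝ)..π / 2, -(2 * k * sin θ ^ 2) * p * (1 - k ^ 2 * sin θ ^ 2) ^ (p - 1)) k := by
  have hU : IsOpen {x : ℝ | x ^ 2 < 1} := isOpen_lt (continuous_pow 2) continuous_const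
  have hbase : ContinuousOn (fun z : ℝ × ℝ => 1 - z.1 ^ 2 * sin z.2 ^ 2)
      ({x : ℝ | x ^ 2 < 1} ×ˢ univ) := by fun_prop
  have hne : ∀ z ∈ {x : ℝ | x ^ 2 < 1} ×ˢ (univ : Set ℝ), 1 - z.1 ^ 2 * sin z.2 ^ 2 ≠ 0 :=
    fun z hz => (one_sub_sq_mul_sin_sq_pos hz.1 z.2).ne'
  refine hasDerivAt_integral_of_continuousOn
    (F := fun x θ => (1 - x ^ 2 * sin θ ^ 2) ^ p)
    (F' := fun x θ => -(2 * x * sin θ ^ 2) * p * (1 - x ^ 2 * sin θ ^ 2) ^ (p - 1)) hU hk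
    (hbase.rpow_const fun z hz => Or.inl (hne z hz))
    ((ContinuousOn.mul (by fun_prop) (hbase.rpow_const fun z hz => Or.inl (hne z hz))))
    fun x hx θ => ?_
  have h := (((hasDerivAt_pow 2 x).mul_const (sin θ ^ 2)).const_sub 1).rpow_const
    (p := p) (Or.inl (one_sub_sq_mul_sin_sq_pos hx θ).ne')
  exact h.congr_deriv (by norm_num)

lemma hasDerivAt_ellipticPowIntegral_of_ne_zero (p : ℝ) (hk0 : k ≠ 0) (hk : k ^ 2 < 1) :
    HasDerivAt (ellipticPowIntegral p)
      (2 * p / k * (ellipticPowIntegral p k - ellipticPowIntegral (p - 1) k)) k := by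
  convert hasDerivAt_ellipticPowIntegral p hk using 1
  rw [ellipticPowIntegral, ellipticPowIntegral, ← integral_sub
    (intervalIntegrable_one_sub_sq_mul_sin_sq_rpow p hk _ _)
    (intervalIntegrable_one_sub_sq_mul_sin_sq_rpow (p - 1) hk _ _), ← integral_const_mul]
  refine integral_congr fun θ _ => ?_
  have hQ := (one_sub_sq_mul_sin_sq_pos hk θ).ne'
  rw [← sub_add_cancel p 1, rpow_add_one hQ, add_sub_cancel_right]
  field_simp
  ring

lemma ellipticPowIntegral_recurrence (p : ℝ) (hk : k ^ 2 < 1) :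
    2 * (p + 1) * ellipticPowIntegral (p + 1) k
      - (2 * p + 1) * (2 - k ^ 2) * ellipticPowIntegral p k
      + 2 * p * (1 - k ^ 2) * ellipticPowIntegral (p - 1) k = 0 := by
  have hint := fun q => intervalIntegrable_one_sub_sq_mul_sin_sq_rpow q hk 0 (π / 2)
  have hderiv : ∀ θ, HasDerivAt (fun θ => k ^ 2 * (sin θ * cos θ * (1 - k ^ 2 * sin θ ^ 2) ^ p))
      (2 * (p + 1) * (1 - k ^ 2 * sin θ ^ 2) ^ (p + 1)
        - (2 * p + 1) * (2 - k ^ 2) * (1 - k ^ 2 * sin θ ^ 2) ^ p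
        + 2 * p * (1 - k ^ 2) * (1 - k ^ 2 * sin θ ^ 2) ^ (p - 1)) θ := by
    intro θ
    have hQ := (one_sub_sq_mul_sin_sq_pos hk θ).ne'
    have hpow := ((((hasDerivAt_sin θ).pow 2).const_mul (k ^ 2)).const_sub 1).rpow_const
      (p := p) (Or.inl hQ)
    refine ((((hasDerivAt_sin θ).mul (hasDerivAt_cos θ)).mul hpow).const_mul
      (k ^ 2)).congr_deriv ?_
    have hp : (1 - k ^ 2 * sin θ ^ 2) ^ p
        = (1 - k ^ 2 * sin θ ^ 2) ^ (p - 1) * (1 - k ^ 2 * sin θ ^ 2) := by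
      rw [← rpow_add_one hQ, sub_add_cancel]
    simp only [Pi.pow_apply, Pi.mul_apply]
    rw [rpow_add_one hQ, hp]
    linear_combination ((1 - k ^ 2 * sin θ ^ 2) ^ (p - 1) * k ^ 2 *
      (1 - k ^ 2 * sin θ ^ 2 - 2 * p * k ^ 2 * sin θ ^ 2)) * sin_sq_add_cos_sq θ
  have hftc := integral_eq_sub_of_hasDerivAt (fun θ _ => hderiv θ)
    ((((hint _).const_mul _).sub ((hint _).const_mul _)).add ((hint _).const_mul _))
  rw [integral_add (((hint _).const_mul _).sub ((hint _).const_mul _)) ((hint _).const_mul _),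
    integral_sub ((hint _).const_mul _) ((hint _).const_mul _), integral_const_mul,
    integral_const_mul, integral_const_mul] at hftc
  simpa [ellipticPowIntegral] using hftc

end EllipticPowIntegral

section CompleteEllipticIntegrals

variable {k : ℝ}

lemma ellipticE_eq_ellipticPowIntegral : ellipticE = ellipticPowIntegral (1 / 2) := by
  funext k
  simp only [ellipticE, ellipticPowIntegral, sqrt_eq_rpow]

lemma ellipticK_eq_ellipticPowIntegral (hk : k ^ 2 ≤ 1) :
    ellipticK k = ellipticPowIntegral (-1 / 2) k := by
  refine integral_congr fun θ _ => ?_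
  rw [sqrt_eq_rpow, one_div, ← rpow_neg ((sub_nonneg.2 hk).trans
    (one_sub_sq_le_one_sub_sq_mul_sin_sq k θ))]
  norm_num

lemma hasDerivAt_ellipticE (hk0 : k ≠ 0) (hk : k ^ 2 < 1) :
    HasDerivAt ellipticE ((ellipticE k - ellipticK k) / k) k := by
  rw [ellipticK_eq_ellipticPowIntegral hk.le, ellipticE_eq_ellipticPowIntegral]
  convert hasDerivAt_ellipticPowIntegral_of_ne_zero (1 / 2) hk0 hk using 1
  norm_num
  ring

lemma ellipticPowIntegral_neg_three_halves (hk : k ^ 2 < 1) :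
    ellipticPowIntegral (-3 / 2) k = ellipticE k / (1 - k ^ 2) := by
  have h := ellipticPowIntegral_recurrence (-1 / 2) hk
  rw [ellipticE_eq_ellipticPowIntegral, eq_div_iff (sub_pos.2 hk).ne']
  norm_num at h
  linarith

lemma ellipticK_eventuallyEq_ellipticPowIntegral (hk : k ^ 2 < 1) :
    ellipticK =ᶠ[𝓝 k] ellipticPowIntegral (-1 / 2) :=
  eventually_of_mem ((isOpen_lt (continuous_pow 2) continuous_const).mem_nhds hk) fun _ hx =>
    ellipticK_eq_ellipticPowIntegral (le_of_lt hx)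

lemma hasDerivAt_ellipticK (hk0 : k ≠ 0) (hk : k ^ 2 < 1) :
    HasDerivAt ellipticK ((ellipticE k - (1 - k ^ 2) * ellipticK k) / (k * (1 - k ^ 2))) k := by
  refine ((hasDerivAt_ellipticPowIntegral_of_ne_zero (-1 / 2) hk0 hk).congr_of_eventuallyEq
    (ellipticK_eventuallyEq_ellipticPowIntegral hk)).congr_deriv ?_
  rw [← ellipticK_eq_ellipticPowIntegral hk.le, show (-1 / 2 - 1 : ℝ) = -3 / 2 by norm_num,
    ellipticPowIntegral_neg_three_halves hk]
  field_simp [(sub_pos.2 hk).ne']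
  ring

lemma continuous_one_div_sqrt_one_sub_sq_mul_sin_sq (hk : k ^ 2 < 1) :
    Continuous fun θ => 1 / √(1 - k ^ 2 * sin θ ^ 2) :=
  continuous_const.div (by fun_prop) fun θ => (sqrt_pos.2 (one_sub_sq_mul_sin_sq_pos hk θ)).ne'

lemma mul_ellipticK_lt_ellipticE {c : ℝ} (hk : k ^ 2 < 1) (hc : c < 1 - k ^ 2) :
    c * ellipticK k < ellipticE k := by
  have hQ := one_sub_sq_mul_sin_sq_pos hk
  have key : ∀ θ, c * (1 / √(1 - k ^ 2 * sin θ ^ 2)) < √(1 - k ^ 2 * sin θ ^ 2) := fun θ => by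
    rw [mul_one_div, div_lt_iff₀ (sqrt_pos.2 (hQ θ)), mul_self_sqrt (hQ θ).le]
    linarith [one_sub_sq_le_one_sub_sq_mul_sin_sq k θ]
  rw [ellipticK, ← integral_const_mul, ellipticE]
  refine integral_lt_integral_of_continuousOn_of_le_of_exists_lt (by positivity)
    (continuous_const.mul (continuous_one_div_sqrt_one_sub_sq_mul_sin_sq hk)).continuousOn
    (by fun_prop) (fun θ _ => (key θ).le) ⟨0, ⟨le_rfl, by positivity⟩, key 0⟩

lemma ellipticE_le_ellipticK (hk : k ^ 2 < 1) : ellipticE k ≤ ellipticK k := by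
  have hQ := one_sub_sq_mul_sin_sq_pos hk
  refine integral_mono_on (by positivity) ((by fun_prop : Continuous _).intervalIntegrable _ _)
    ((continuous_one_div_sqrt_one_sub_sq_mul_sin_sq hk).intervalIntegrable _ _) fun θ _ => ?_
  rw [le_div_iff₀ (sqrt_pos.2 (hQ θ)), mul_self_sqrt (hQ θ).le]
  exact one_sub_sq_mul_sin_sq_le_one k θ

lemma ellipticK_pos (hk : k ^ 2 < 1) : 0 < ellipticK k := by
  have hE : 0 < ellipticE k := by
    simpa using mul_ellipticK_lt_ellipticE (c := 0) hk (by linarith)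
  exact hE.trans_le (ellipticE_le_ellipticK hk)

lemma ellipticK_le_pi_div_two_div_sqrt (hk : k ^ 2 < 1) :
    ellipticK k ≤ π / 2 / √(1 - k ^ 2) := by
  have h0 : 0 < √(1 - k ^ 2) := sqrt_pos.2 (sub_pos.2 hk)
  have h := integral_mono_on (μ := volume) (a := 0) (b := π / 2)
    (g := fun _ => 1 / √(1 - k ^ 2)) (by positivity)
    ((continuous_one_div_sqrt_one_sub_sq_mul_sin_sq hk).intervalIntegrable _ _)
    intervalIntegrable_const
    fun θ _ => one_div_le_one_div_of_le h0
      (sqrt_le_sqrt (one_sub_sq_le_one_sub_sq_mul_sin_sq k θ))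
  simpa [ellipticK, div_eq_mul_inv] using h

lemma tendsto_ellipticE_zero : Tendsto ellipticE (𝓝 0) (𝓝 (π / 2)) := by
  rw [ellipticE_eq_ellipticPowIntegral, ← ellipticPowIntegral_zero (1 / 2)]
  exact (hasDerivAt_ellipticPowIntegral _ (by norm_num)).continuousAt

lemma tendsto_ellipticK_zero : Tendsto ellipticK (𝓝 0) (𝓝 (π / 2)) := by
  have hk : (0 : ℝ) ^ 2 < 1 := by norm_num
  rw [← ellipticPowIntegral_zero (-1 / 2)]
  exact (hasDerivAt_ellipticPowIntegral _ hk).continuousAt.tendsto.congr'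
    (ellipticK_eventuallyEq_ellipticPowIntegral hk).symm

lemma ellipticE_one : ellipticE 1 = 1 := by
  have hcos : ∀ θ ∈ uIcc 0 (π / 2), √(1 - 1 ^ 2 * sin θ ^ 2) = cos θ := fun θ hθ => by
    rw [uIcc_of_le (by positivity)] at hθ
    rw [one_pow, one_mul, ← cos_sq',
      sqrt_sq (cos_nonneg_of_mem_Icc ⟨by linarith [hθ.1, pi_pos], hθ.2⟩)]
  rw [ellipticE, integral_congr hcos, integral_cos]
  simp

lemma continuous_ellipticE : Continuous ellipticE :=
  continuous_parametric_intervalIntegral_of_continuous' (by fun_prop) _ _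

lemma tendsto_one_sub_sq_mul_ellipticK_one :
    Tendsto (fun k => (1 - k ^ 2) * ellipticK k) (𝓝[<] 1) (𝓝 0) := by
  have hupper : Tendsto (fun k : ℝ => π / 2 * √(1 - k ^ 2)) (𝓝[<] 1) (𝓝 0) := by
    have h : ContinuousAt (fun k : ℝ => π / 2 * √(1 - k ^ 2)) 1 := by fun_prop
    simpa using h.tendsto.mono_left nhdsWithin_le_nhds
  refine squeeze_zero' ?_ ?_ hupper <;>
    filter_upwards [Ioo_mem_nhdsLT (show (0 : ℝ) < 1 by norm_num)] with k ⟨hk0, hk1⟩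
  all_goals have hk : k ^ 2 < 1 := by nlinarith
  · exact mul_nonneg (sub_pos.2 hk).le (ellipticK_pos hk).le
  · calc (1 - k ^ 2) * ellipticK k ≤ (1 - k ^ 2) * (π / 2 / √(1 - k ^ 2)) :=
          mul_le_mul_of_nonneg_left (ellipticK_le_pi_div_two_div_sqrt hk) (sub_pos.2 hk).le
      _ = π / 2 * ((1 - k ^ 2) / √(1 - k ^ 2)) := by ring
      _ = π / 2 * √(1 - k ^ 2) := by rw [div_sqrt]

end CompleteEllipticIntegrals

section IntervalBijection

variable {α β : Type*} [TopologicalSpace α] [LinearOrder β] [TopologicalSpace β]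
  [OrderClosedTopology β] {f : α → β} {la lb : β}

theorem StrictMonoOn.mapsTo_Ioo_of_tendsto [LinearOrder α] [OrderTopology α] [DenselyOrdered α]
    {a b : α} (hf : StrictMonoOn f (Ioo a b))
    (ha : Tendsto f (𝓝[>] a) (𝓝 la)) (hb : Tendsto f (𝓝[<] b) (𝓝 lb)) :
    MapsTo f (Ioo a b) (Ioo la lb) := by
  intro x hx
  obtain ⟨u, hau, hux⟩ := exists_between hx.1
  obtain ⟨v, hxv, hvb⟩ := exists_between hx.2
  have := nhdsGT_neBot_of_exists_gt ⟨u, hau⟩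
  have := nhdsLT_neBot_of_exists_lt ⟨v, hvb⟩
  have hlau : la ≤ f u := le_of_tendsto ha <| by
    filter_upwards [Ioo_mem_nhdsGT hau] with z hz
    exact (hf ⟨hz.1, hz.2.trans (hux.trans hx.2)⟩ ⟨hau, hux.trans hx.2⟩ hz.2).le
  have hvlb : f v ≤ lb := ge_of_tendsto hb <| by
    filter_upwards [Ioo_mem_nhdsLT hvb] with z hz
    exact (hf ⟨hx.1.trans hxv, hvb⟩ ⟨hx.1.trans (hxv.trans hz.1), hz.2⟩ hz.1).le
  exact ⟨hlau.trans_lt (hf ⟨hau, hux.trans hx.2⟩ hx hux),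
    (hf hx ⟨hx.1.trans hxv, hvb⟩ hxv).trans_le hvlb⟩

theorem ContinuousOn.surjOn_Ioo_of_tendsto [ConditionallyCompleteLinearOrder α]
    [OrderTopology α] [DenselyOrdered α] {a b : α} (hab : a < b) (hf : ContinuousOn f (Ioo a b))
    (ha : Tendsto f (𝓝[>] a) (𝓝 la)) (hb : Tendsto f (𝓝[<] b) (𝓝 lb)) :
    SurjOn f (Ioo a b) (Ioo la lb) := by
  intro y hy
  have := nhdsLT_neBot_of_exists_lt ⟨a, hab⟩
  obtain ⟨v, hyv, hv⟩ := ((hb.eventually (Ioi_mem_nhds hy.2)).and (Ioo_mem_nhdsLT hab)).exists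
  have := nhdsGT_neBot_of_exists_gt ⟨v, hv.1⟩
  obtain ⟨u, huy, hu⟩ := ((ha.eventually (Iio_mem_nhds hy.1)).and (Ioo_mem_nhdsGT hv.1)).exists
  obtain ⟨x, hx, hxy⟩ :=
    intermediate_value_Ioo hu.2.le (hf.mono (Icc_subset_Ioo hu.1 hv.2)) ⟨huy, hyv⟩
  exact ⟨x, ⟨hu.1.trans hx.1, hx.2.trans hv.2⟩, hxy⟩

end IntervalBijection

section Eta1

variable {k : ℝ}

lemma tendsto_eta1_of_tendsto {l : Filter ℝ} {k₀ e b : ℝ} (hl : l ≤ 𝓝 k₀)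
    (hE : Tendsto ellipticE l (𝓝 e)) (hK : Tendsto (fun k => (1 - k ^ 2) * ellipticK k) l (𝓝 b))
    (hg : 2 * e - b ≠ 0) :
    Tendsto eta1 l (𝓝 (-1 / 24 + ((1 + k₀ ^ 2) * e - b) / (6 * (2 * e - b) ^ 3))) := by
  have hsq := ((continuous_pow 2).tendsto k₀).mono_left hl
  exact ((((tendsto_const_nhds.add hsq).mul hE).sub hK).div
    ((((hE.const_mul 2).sub hK).pow 3).const_mul 6) (by positivity)).const_add _

lemma tendsto_eta1_nhdsGT_zero : Tendsto eta1 (𝓝[>] 0) (𝓝 (-1 / 24)) := by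
  have hK : Tendsto (fun k => (1 - k ^ 2) * ellipticK k) (𝓝 0) (𝓝 (π / 2)) := by
    have h : ContinuousAt (fun k : ℝ => 1 - k ^ 2) 0 := by fun_prop
    simpa using h.tendsto.mul tendsto_ellipticK_zero
  simpa using tendsto_eta1_of_tendsto nhdsWithin_le_nhds
    (tendsto_ellipticE_zero.mono_left nhdsWithin_le_nhds) (hK.mono_left nhdsWithin_le_nhds)
    (by linarith [pi_pos])

lemma tendsto_eta1_nhdsLT_one : Tendsto eta1 (𝓝[<] 1) (𝓝 0) := by
  have hE : Tendsto ellipticE (𝓝[<] 1) (𝓝 1) := by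
    simpa [ellipticE_one] using continuous_ellipticE.continuousAt.tendsto.mono_left
      (nhdsWithin_le_nhds (a := (1 : ℝ)) (s := Iio 1))
  convert tendsto_eta1_of_tendsto nhdsWithin_le_nhds hE tendsto_one_sub_sq_mul_ellipticK_one
    (by norm_num) using 2
  norm_num

lemma two_mul_ellipticE_sub_pos (hk : k ^ 2 < 1) :
    0 < 2 * ellipticE k - (1 - k ^ 2) * ellipticK k := by
  linarith [mul_ellipticK_lt_ellipticE (c := (1 - k ^ 2) / 2) hk (by linarith)]

lemma hasDerivAt_eta1 (hk0 : k ≠ 0) (hk : k ^ 2 < 1) :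
    HasDerivAt eta1 ((1 - k ^ 2) * (ellipticE k - (1 - k) * ellipticK k)
      * ((1 + k) * ellipticK k - ellipticE k)
      / (2 * k * (2 * ellipticE k - (1 - k ^ 2) * ellipticK k) ^ 4)) k := by
  have hk2 : 1 - k ^ 2 ≠ 0 := (sub_pos.2 hk).ne'
  have hE := hasDerivAt_ellipticE hk0 hk
  have hK := hasDerivAt_ellipticK hk0 hk
  have hsq := hasDerivAt_pow 2 k
  have hf : HasDerivAt (fun x => (1 + x ^ 2) * ellipticE x - (1 - x ^ 2) * ellipticK x)
      (3 * k * ellipticE k) k := by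
    refine (((hsq.const_add 1).fun_mul hE).sub ((hsq.const_sub 1).fun_mul hK)).congr_deriv ?_
    field_simp
    ring
  have hg : HasDerivAt (fun x => 2 * ellipticE x - (1 - x ^ 2) * ellipticK x)
      ((ellipticE k - (1 - k ^ 2) * ellipticK k) / k) k := by
    refine ((hE.const_mul 2).sub ((hsq.const_sub 1).fun_mul hK)).congr_deriv ?_
    field_simp
    ring
  have hg0 := (two_mul_ellipticE_sub_pos hk).ne'
  refine ((hf.fun_div ((hg.fun_pow 3).const_mul 6) (by positivity)).const_add
    (-1 / 24)).congr_deriv ?_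
  norm_num
  field_simp
  ring

lemma continuousOn_eta1 : ContinuousOn eta1 (Ioo 0 1) := fun k hk =>
  (hasDerivAt_eta1 hk.1.ne' (by nlinarith [hk.1, hk.2])).continuousAt.continuousWithinAt

lemma strictMonoOn_eta1 : StrictMonoOn eta1 (Ioo 0 1) := by
  refine strictMonoOn_of_deriv_pos (convex_Ioo 0 1) continuousOn_eta1 fun k hk => ?_
  rw [interior_Ioo] at hk
  obtain ⟨hk0, hk1⟩ := hk
  have hk2 : k ^ 2 < 1 := by nlinarith
  have h1 : (1 - k) * ellipticK k < ellipticE k := mul_ellipticK_lt_ellipticE hk2 (by nlinarith)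
  have h2 : ellipticE k < (1 + k) * ellipticK k := by
    nlinarith [ellipticE_le_ellipticK hk2, ellipticK_pos hk2]
  have hg := two_mul_ellipticE_sub_pos hk2
  rw [(hasDerivAt_eta1 hk0.ne' hk2).deriv]
  exact div_pos (mul_pos (mul_pos (sub_pos.2 hk2) (sub_pos.2 h1)) (sub_pos.2 h2)) (by positivity)

end Eta1

open Filter Topology in
/-- `η₁` is strictly increasing on `(0,1)`, tends to `−1/24` as `k → 0⁺`, tends to `0`
as `k → 1⁻`, and is a bijection from `(0,1)` onto `(−1/24, 0)`. -/
theorem eta1_properties :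
    StrictMonoOn eta1 (Set.Ioo 0 1) ∧
      Tendsto eta1 (𝓝[>] 0) (𝓝 (-1 / 24)) ∧
      Tendsto eta1 (𝓝[<] 1) (𝓝 0) ∧
      Set.BijOn eta1 (Set.Ioo 0 1) (Set.Ioo (-1 / 24) 0) :=
  ⟨strictMonoOn_eta1, tendsto_eta1_nhdsGT_zero, tendsto_eta1_nhdsLT_one,
    strictMonoOn_eta1.mapsTo_Ioo_of_tendsto tendsto_eta1_nhdsGT_zero tendsto_eta1_nhdsLT_one,
    strictMonoOn_eta1.injOn,
    continuousOn_eta1.surjOn_Ioo_of_tendsto one_pos tendsto_eta1_nhdsGT_zero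
      tendsto_eta1_nhdsLT_one⟩
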